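/- arXiv:2402.01890 — 4 statements merged into one kernel-verified Lean document; each statement's English description precedes it below -/
import Mathlib

section
/- For all n, k ≥ 1, the binomial coefficient C(n+k−1, k) equals the sum, over all partitions ν of k with at most n parts, of the multinomial coefficient n!/(m_1!·m_2!⋯m_q!), where (m_1,…,m_q) = Φ(ν). -/
/-!
`C(n+k-1, k)` counts the multisets of size `k` on `n` letters, i.e. the maps `c : Fin n → ℕ`
with sum `k`. Sort them by the partition `ν` formed by the nonzero values of `c`. The maps of
shape `ν` are those whose multiset of values is `ν` padded with `n - ℓ(ν)` zeros. They form one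
orbit of `Perm (Fin n)` acting by precomposition, and the stabilizer of a point is the product of
the symmetric groups of its level sets, so by orbit–stabilizer the orbit has `n! / ∏ mᵢ!`
elements, where the `mᵢ` are the multiplicities of the padded `ν`: the parts of `Φ(ν)`.
-/

namespace SP

/-- The multiset of multiplicities of the (distinct) parts of a multiset. -/
def multMultiset (s : Multiset ℕ) : Multiset ℕ := s.dedup.map fun v => s.count v

/-- The map `Φ : Par_k^{≤ n} → Par_n`: multiplicities of the distinct parts of `ν`,
together with `n - ℓ(ν)`, discarding the entry `0` if it occurs. -/
def phiMultiset (n : ℕ) {k : ℕ} (ν : Nat.Partition k) : Multiset ℕ :=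
  (multMultiset ν.parts + {n - ν.parts.card}).filter fun x => x ≠ 0

open Finset Equiv MulAction Nat

section FunctionsWithGivenValues

variable {α β : Type*} [Fintype α]

theorem exists_univ_map_eq {s : Multiset β} (hs : s.card = Fintype.card α) :
    ∃ f : α → β, univ.val.map f = s := by
  let e : α ≃ Fin s.toList.length := Fintype.equivFinOfCardEq (by rw [s.length_toList, hs])
  refine ⟨s.toList.get ∘ e, ?_⟩
  rw [← Multiset.map_map, Multiset.map_univ_val_equiv, Fin.univ_val_map, List.ofFn_get,
    Multiset.coe_toList]

variable [DecidableEq β]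

theorem card_fiber_eq_count (f : α → β) (b : β) :
    Fintype.card {a // f a = b} = (univ.val.map f).count b := by
  rw [Fintype.card_subtype, Multiset.count_map]
  simp only [eq_comm (a := b)]
  rfl

theorem exists_perm_comp_eq {f g : α → β} (h : univ.val.map g = univ.val.map f) :
    ∃ σ : Perm α, f ∘ σ = g :=
  ⟨ofFiberEquiv fun b =>
      Fintype.equivOfCardEq (by rw [card_fiber_eq_count, card_fiber_eq_count, h]),
    funext (ofFiberEquiv_map _)⟩

theorem orbit_domMulAct_eq (f : α → β) :
    orbit (Perm α)ᵈᵐᵃ f = {g | univ.val.map g = univ.val.map f} := by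
  ext g
  constructor
  · rintro ⟨σ, rfl⟩
    change univ.val.map (f ∘ ⇑(DomMulAct.mk.symm σ : Perm α)) = _
    rw [← Multiset.map_map, Multiset.map_univ_val_equiv]
  · intro h
    obtain ⟨σ, rfl⟩ := exists_perm_comp_eq h
    exact ⟨DomMulAct.mk σ, rfl⟩

theorem card_stabilizer_domMulAct [DecidableEq α] (f : α → β) :
    Nat.card (stabilizer (Perm α)ᵈᵐᵃ f) =
      ∏ b ∈ univ.image f, (Fintype.card {a // f a = b})! := by
  rw [← DomMulAct.stabilizer_card', ← Nat.card_eq_fintype_card]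
  exact Nat.card_congr (subtypeEquiv DomMulAct.mk.symm fun _ => DomMulAct.mem_stabilizer_iff)

theorem card_univ_map_eq_mul_prod_factorial [DecidableEq α] {s : Multiset β}
    (hs : s.card = Fintype.card α) :
    Nat.card {g : α → β // univ.val.map g = s} * ∏ b ∈ s.toFinset, (s.count b)! =
      (Fintype.card α)! := by
  obtain ⟨f, rfl⟩ := exists_univ_map_eq hs
  calc Nat.card {g : α → β // univ.val.map g = univ.val.map f} *
        ∏ b ∈ (univ.val.map f).toFinset, ((univ.val.map f).count b)!
      = Nat.card (orbit (Perm α)ᵈᵐᵃ f) * Nat.card (stabilizer (Perm α)ᵈᵐᵃ f) := by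
        simp only [orbit_domMulAct_eq, card_stabilizer_domMulAct, card_fiber_eq_count]
        rfl
    _ = Nat.card (Perm α) := by
        rw [← Nat.card_prod, Nat.card_congr (orbitProdStabilizerEquivGroup _ f)]
        exact Nat.card_congr DomMulAct.mk.symm
    _ = (Fintype.card α)! := by rw [Nat.card_eq_fintype_card, Fintype.card_perm]

end FunctionsWithGivenValues

theorem zero_notMem_parts {k : ℕ} (ν : Nat.Partition k) : 0 ∉ ν.parts :=
  fun h => (ν.parts_pos h).false

theorem filter_ne_zero_eq_iff {M t : Multiset ℕ} (ht : 0 ∉ t) :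
    M.filter (· ≠ 0) = t ↔ M = t + Multiset.replicate (M.card - t.card) 0 := by
  constructor
  · intro h
    have hsplit := (Multiset.filter_add_not (· ≠ 0) M).symm
    rw [h] at hsplit
    have hzero : M.filter (fun x => ¬ x ≠ 0) = Multiset.replicate (M.card - t.card) 0 := by
      refine Multiset.eq_replicate.2
        ⟨?_, fun b hb => not_not.1 (Multiset.of_mem_filter (p := fun x => ¬ x ≠ 0) hb)⟩
      have := congrArg Multiset.card hsplit
      rw [Multiset.card_add] at this
      omega
    rw [← hzero]
    exact hsplit
  · intro h
    rw [h, Multiset.filter_add, Multiset.filter_eq_self.2 fun _ ha => ne_of_mem_of_not_mem ha ht,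
      Multiset.filter_eq_nil.2 fun a ha => by simp [Multiset.eq_of_mem_replicate ha], add_zero]

theorem filter_map_count_ne_zero {σ : Type*} [Fintype σ] [DecidableEq σ] (s : Multiset σ) :
    (univ.val.map s.count).filter (· ≠ 0) = s.dedup.map s.count := by
  rw [Multiset.filter_map]
  congr 1
  exact (Multiset.Nodup.ext (univ.nodup.filter _) s.nodup_dedup).2 fun a => by simp

theorem card_parts_ofSym_le {σ : Type*} [Fintype σ] [DecidableEq σ] {k : ℕ} (s : Sym σ k) :
    (Nat.Partition.ofSym s).parts.card ≤ Fintype.card σ := by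
  simpa [Nat.Partition.ofSym, Multiset.card_toFinset] using card_le_univ s.1.toFinset

def paddedParts (n : ℕ) {k : ℕ} (ν : Nat.Partition k) : Multiset ℕ :=
  ν.parts + Multiset.replicate (n - ν.parts.card) 0

theorem multMultiset_add_replicate_zero {t : Multiset ℕ} (ht : 0 ∉ t) (c : ℕ) :
    multMultiset (t + Multiset.replicate c 0) = (multMultiset t + {c}).filter (· ≠ 0) := by
  have hpos : ∀ x ∈ multMultiset t, x ≠ 0 := by
    simp only [multMultiset, Multiset.mem_map, Multiset.mem_dedup]
    rintro _ ⟨v, hv, rfl⟩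
    exact Multiset.count_ne_zero.2 hv
  rcases eq_or_ne c 0 with rfl | hc
  · rw [Multiset.replicate_zero, add_zero, Multiset.filter_add, Multiset.filter_eq_self.2 hpos]
    simp
  · have hdedup : (t + Multiset.replicate c 0).dedup = 0 ::ₘ t.dedup :=
      (Multiset.Nodup.ext (Multiset.nodup_dedup _) (t.nodup_dedup.cons (by simpa using ht))).2
        fun a => by simp [Multiset.mem_replicate, hc, or_comm]
    have hcount : ∀ a ∈ t.dedup, (t + Multiset.replicate c 0).count a = t.count a := by
      intro a ha
      rw [Multiset.count_add, Multiset.count_replicate, if_neg, add_zero]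
      rintro rfl
      exact ht (Multiset.mem_dedup.1 ha)
    have hfilter : (multMultiset t + {c}).filter (· ≠ 0) = c ::ₘ multMultiset t := by
      rw [Multiset.filter_eq_self.2, add_comm, Multiset.singleton_add]
      simp only [Multiset.mem_add, Multiset.mem_singleton]
      rintro a (ha | rfl)
      exacts [hpos a ha, hc]
    rw [hfilter, multMultiset, hdedup, Multiset.map_cons, Multiset.map_congr rfl hcount,
      Multiset.count_add, Multiset.count_eq_zero.2 ht, Multiset.count_replicate_self, zero_add]
    rfl

theorem phiMultiset_eq_multMultiset_paddedParts (n : ℕ) {k : ℕ} (ν : Nat.Partition k) :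
    phiMultiset n ν = multMultiset (paddedParts n ν) :=
  (multMultiset_add_replicate_zero (zero_notMem_parts ν) _).symm

theorem prod_map_factorial_multMultiset (s : Multiset ℕ) :
    ((multMultiset s).map factorial).prod = ∏ v ∈ s.toFinset, (s.count v)! := by
  rw [multMultiset, Multiset.map_map, Finset.prod_eq_multiset_prod]
  rfl

section SymFibers

variable {σ : Type*} [Fintype σ] [DecidableEq σ] {k : ℕ}

noncomputable def ofSymFiberEquiv (ν : Nat.Partition k) :
    {s : Sym σ k // Nat.Partition.ofSym s = ν} ≃
      {f : σ → ℕ // univ.val.map f = paddedParts (Fintype.card σ) ν} :=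
  ((Sym.equivNatSumOfFintype σ k).subtypeEquiv fun s => by
      have hparts : (Nat.Partition.ofSym s).parts =
          (univ.val.map (Sym.equivNatSumOfFintype σ k s : σ → ℕ)).filter (· ≠ 0) :=
        (filter_map_count_ne_zero (s : Multiset σ)).symm
      rw [Nat.Partition.ext_iff, hparts, filter_ne_zero_eq_iff (zero_notMem_parts ν),
        Multiset.card_map, Finset.card_val, Finset.card_univ]
      rfl).trans
    (subtypeSubtypeEquivSubtype fun {f} hf => by
      rw [Finset.sum_eq_multiset_sum, hf, paddedParts, Multiset.sum_add, ν.parts_sum]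
      simp)

theorem card_ofSym_fiber_mul_prod_factorial {ν : Nat.Partition k}
    (hν : ν.parts.card ≤ Fintype.card σ) :
    Nat.card {s : Sym σ k // Nat.Partition.ofSym s = ν} *
        ((phiMultiset (Fintype.card σ) ν).map factorial).prod = (Fintype.card σ)! := by
  rw [Nat.card_congr (ofSymFiberEquiv ν), phiMultiset_eq_multMultiset_paddedParts,
    prod_map_factorial_multMultiset]
  exact card_univ_map_eq_mul_prod_factorial (by simp [paddedParts]; omega)

end SymFibers

theorem stmt2_general (n k : ℕ) :
    Nat.choose (n + k - 1) k =
      ∑ ν : {ν : Nat.Partition k // ν.parts.card ≤ n},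
        Nat.factorial n / ((phiMultiset n ν.1).map Nat.factorial).prod := by
  let shape (s : Sym (Fin n) k) : {ν : Nat.Partition k // ν.parts.card ≤ n} :=
    ⟨Nat.Partition.ofSym s, (card_parts_ofSym_le s).trans_eq (Fintype.card_fin n)⟩
  have hchoose : (n + k - 1).choose k = Nat.card (Sym (Fin n) k) := by
    rw [Nat.card_eq_fintype_card, Sym.card_sym_eq_choose, Fintype.card_fin]
  rw [hchoose, Nat.card_congr (sigmaFiberEquiv shape).symm, Nat.card_sigma]
  refine Finset.sum_congr rfl fun ν _ => ?_
  have hfiber := card_ofSym_fiber_mul_prod_factorial (σ := Fin n)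
    (ν.2.trans_eq (Fintype.card_fin n).symm)
  rw [Fintype.card_fin] at hfiber
  rw [Nat.card_congr (subtypeEquivRight fun s => Subtype.ext_iff)]
  exact Nat.eq_div_of_mul_eq_left (right_ne_zero_of_mul (hfiber ▸ factorial_ne_zero n)) hfiber

theorem stmt2 (n k : ℕ) (hn : 1 ≤ n) (hk : 1 ≤ k) :
    Nat.choose (n + k - 1) k =
      ∑ ν : {ν : Nat.Partition k // ν.parts.card ≤ n},
        Nat.factorial n / ((phiMultiset n ν.1).map Nat.factorial).prod :=
  stmt2_general n k

end SP
end

section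
/- Let k ≥ 1 and n ≥ 2k, and let S_n act diagonally on ordered pairs (A,B) of size-k multisets with elements in {1,…,n}. The map sending (A,B) to the multiset of pairs (m_A(i), m_B(i)), taken over those i ∈ {1,…,n} with (m_A(i), m_B(i)) ≠ (0,0), where m_A(i) denotes the multiplicity of i in A, induces a bijection from the set of S_n-orbits of such pairs onto the set BiPar_k of bipartite partitions of k. -/
/-!
The orbit of `(A, B)` is determined by the multiset of all `n` multiplicity pairs
`(m_A(i), m_B(i))`: two functions on a finite type with the same multiset of values differ by a
permutation of the domain (match their fibres). Dropping the entries `(0, 0)` loses nothing,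
because the total number of entries is `n`. Conversely, a bipartite partition of `k` has at most
`2k ≤ n` parts, so padded with `(0, 0)`s it is the multiset of values of some
`f : Fin n → ℕ × ℕ`, and the two coordinates of `f` are the multiplicity functions of two size-`k`
multisets.
-/

open Equiv

namespace SP

/-- The action of `Perm (Fin n)` on size-`k` multisets over `Fin n`. -/
instance symAction (n k : ℕ) : MulAction (Equiv.Perm (Fin n)) (Sym (Fin n) k) where
  smul σ s := ⟨s.1.map σ, by rw [Multiset.card_map]; exact s.2⟩
  one_smul s := Subtype.ext (by show s.1.map _ = s.1; simp)
  mul_smul σ τ s := Subtype.ext (by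
    show s.1.map _ = (s.1.map _).map _
    simp [Multiset.map_map, Function.comp_def])

/-- `b` is a bipartite partition of `k`: a multiset of pairs of nonnegative integers,
none equal to `(0,0)`, whose first coordinates sum to `k` and whose second
coordinates sum to `k`. -/
def IsBiPar (k : ℕ) (b : Multiset (ℕ × ℕ)) : Prop :=
  (0, 0) ∉ b ∧ (b.map Prod.fst).sum = k ∧ (b.map Prod.snd).sum = k

/-- The multiset of pairs of multiplicities `(m_A(i), m_B(i))`, over those
`i ∈ {1,…,n}` for which this pair is nonzero. -/
def pairToBiPar (n k : ℕ) (A B : Sym (Fin n) k) : Multiset (ℕ × ℕ) :=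
  ((Finset.univ : Finset (Fin n)).val.map fun i => (A.1.count i, B.1.count i)).filter
    fun p => p ≠ (0, 0)

end SP

theorem Fintype.exists_perm_comp_eq_of_map_univ_eq {α β : Type*} [Fintype α] [DecidableEq β]
    {f g : α → β} (h : Finset.univ.val.map f = Finset.univ.val.map g) :
    ∃ σ : Perm α, f ∘ σ = g := by
  classical
  have hcard (c : β) : Fintype.card {a // g a = c} = Fintype.card {a // f a = c} := by
    have := congrArg (Multiset.count c) h
    simp only [Multiset.count_map] at this
    simp only [Fintype.card_subtype, Finset.card_def, Finset.filter_val, eq_comm (b := c)]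
    exact this.symm
  exact ⟨ofFiberEquiv fun c => Fintype.equivOfCardEq (hcard c), funext (ofFiberEquiv_map _)⟩

theorem Fintype.exists_map_univ_eq {α β : Type*} [Fintype α] (m : Multiset β)
    (h : Multiset.card m = Fintype.card α) : ∃ f : α → β, Finset.univ.val.map f = m := by
  let e : α ≃ Fin m.toList.length := (equivFin α).trans (finCongr (by simp [h]))
  refine ⟨m.toList.get ∘ e, ?_⟩
  rw [← Multiset.map_map, Multiset.map_univ_val_equiv, Fin.univ_val_map, List.ofFn_get,
    Multiset.coe_toList]

namespace Multiset

variable {α : Type*} [DecidableEq α]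

theorem eq_of_card_eq_of_filter_ne_eq {a : α} {m m' : Multiset α} (hcard : card m = card m')
    (h : m.filter (· ≠ a) = m'.filter (· ≠ a)) : m = m' := by
  have card_split (s : Multiset α) : card s = card (s.filter (· ≠ a)) + count a s := by
    conv_lhs => rw [← filter_add_not (· ≠ a) s]
    simp only [ne_eq, not_not, card_add, filter_eq', card_replicate]
  have hcount : count a m = count a m' := by
    have hm := card_split m
    rw [h, hcard, card_split m'] at hm
    omega
  rw [← filter_add_not (· ≠ a) m, ← filter_add_not (· ≠ a) m', h]
  simp only [ne_eq, not_not, filter_eq', hcount]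

theorem sum_map_filter_ne {M : Type*} [AddCommMonoid M] {f : α → M} {a : α} (ha : f a = 0)
    (m : Multiset α) : ((m.filter (· ≠ a)).map f).sum = (m.map f).sum := by
  conv_rhs => rw [← filter_add_not (· ≠ a) m]
  have : ((m.filter fun x => ¬x ≠ a).map f).sum = 0 := sum_eq_zero fun x hx => by
    obtain ⟨y, hy, rfl⟩ := mem_map.1 hx
    rw [of_not_not (mem_filter.1 hy).2, ha]
  rw [map_add, sum_add, this, add_zero]

end Multiset

namespace SP

section MultiplicityPair

variable {α : Type*} [DecidableEq α] {k : ℕ}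

def multiplicityPair (p : Sym α k × Sym α k) (i : α) : ℕ × ℕ :=
  (p.1.1.count i, p.2.1.count i)

theorem multiplicityPair_injective :
    Function.Injective (multiplicityPair : Sym α k × Sym α k → α → ℕ × ℕ) := fun _ _ h =>
  Prod.ext (Sym.ext (Multiset.ext.2 fun i => congrArg Prod.fst (congrFun h i)))
    (Sym.ext (Multiset.ext.2 fun i => congrArg Prod.snd (congrFun h i)))

variable [Fintype α]

theorem sum_multiplicityPair_fst (p : Sym α k × Sym α k) :
    ∑ i, (multiplicityPair p i).1 = k :=
  (Multiset.sum_count_eq_card fun a _ => Finset.mem_univ a).trans p.1.2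

theorem sum_multiplicityPair_snd (p : Sym α k × Sym α k) :
    ∑ i, (multiplicityPair p i).2 = k :=
  (Multiset.sum_count_eq_card fun a _ => Finset.mem_univ a).trans p.2.2

theorem exists_multiplicityPair_eq {f : α → ℕ × ℕ} (h₁ : ∑ i, (f i).1 = k)
    (h₂ : ∑ i, (f i).2 = k) : ∃ p : Sym α k × Sym α k, multiplicityPair p = f := by
  refine ⟨((Sym.equivNatSumOfFintype α k).symm ⟨_, h₁⟩,
    (Sym.equivNatSumOfFintype α k).symm ⟨_, h₂⟩), funext fun i => ?_⟩
  exact Prod.ext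
    (congrFun (congrArg Subtype.val ((Sym.equivNatSumOfFintype α k).apply_symm_apply _)) i)
    (congrFun (congrArg Subtype.val ((Sym.equivNatSumOfFintype α k).apply_symm_apply _)) i)

end MultiplicityPair

theorem card_le_of_isBiPar {k : ℕ} {b : Multiset (ℕ × ℕ)} (hb : IsBiPar k b) :
    Multiset.card b ≤ 2 * k := by
  obtain ⟨hb₀, hb₁, hb₂⟩ := hb
  have hpos : ∀ x ∈ b.map fun q => q.1 + q.2, 1 ≤ x := by
    intro s hs
    obtain ⟨⟨x, y⟩, hxy, rfl⟩ := Multiset.mem_map.1 hs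
    rcases Nat.eq_zero_or_pos (x + y) with h | h
    · obtain ⟨rfl, rfl⟩ : x = 0 ∧ y = 0 := by omega
      exact absurd hxy hb₀
    · exact h
  calc Multiset.card b = Multiset.card (b.map fun q => q.1 + q.2) • 1 := by simp
    _ ≤ (b.map fun q => q.1 + q.2).sum := Multiset.card_nsmul_le_sum hpos
    _ = 2 * k := by rw [Multiset.sum_map_add, hb₁, hb₂]; ring

section Orbits

variable {n k : ℕ}

theorem count_smul (σ : Perm (Fin n)) (A : Sym (Fin n) k) (i : Fin n) :
    (σ • A).1.count i = A.1.count (σ⁻¹ i) := by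
  show (A.1.map σ).count i = _
  simpa using Multiset.count_map_eq_count' σ A.1 σ.injective (σ⁻¹ i)

theorem multiplicityPair_smul (σ : Perm (Fin n)) (p : Sym (Fin n) k × Sym (Fin n) k) :
    multiplicityPair (σ • p) = multiplicityPair p ∘ ⇑σ⁻¹ :=
  funext fun i => Prod.ext (count_smul σ p.1 i) (count_smul σ p.2 i)

theorem mem_orbit_iff_map_univ_multiplicityPair_eq (p q : Sym (Fin n) k × Sym (Fin n) k) :
    p ∈ MulAction.orbit (Perm (Fin n)) q ↔
      Finset.univ.val.map (multiplicityPair p) = Finset.univ.val.map (multiplicityPair q) := by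
  constructor
  · rintro ⟨σ, rfl⟩
    rw [multiplicityPair_smul, ← Multiset.map_map, Multiset.map_univ_val_equiv]
  · intro h
    obtain ⟨σ, hσ⟩ := Fintype.exists_perm_comp_eq_of_map_univ_eq h.symm
    refine ⟨σ⁻¹, multiplicityPair_injective ?_⟩
    rw [multiplicityPair_smul, inv_inv, hσ]

theorem pairToBiPar_eq_filter (p : Sym (Fin n) k × Sym (Fin n) k) :
    pairToBiPar n k p.1 p.2 =
      (Finset.univ.val.map (multiplicityPair p)).filter fun x => x ≠ (0, 0) :=
  rfl

theorem pairToBiPar_eq_iff_mem_orbit (p q : Sym (Fin n) k × Sym (Fin n) k) :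
    pairToBiPar n k p.1 p.2 = pairToBiPar n k q.1 q.2 ↔
      p ∈ MulAction.orbit (Perm (Fin n)) q := by
  rw [mem_orbit_iff_map_univ_multiplicityPair_eq, pairToBiPar_eq_filter, pairToBiPar_eq_filter]
  exact ⟨Multiset.eq_of_card_eq_of_filter_ne_eq (by simp), congrArg _⟩

theorem isBiPar_pairToBiPar (p : Sym (Fin n) k × Sym (Fin n) k) :
    IsBiPar k (pairToBiPar n k p.1 p.2) := by
  refine ⟨fun h => (Multiset.mem_filter.1 h).2 rfl, ?_, ?_⟩
  · rw [pairToBiPar_eq_filter, Multiset.sum_map_filter_ne (a := (0, 0)) rfl, Multiset.map_map]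
    exact sum_multiplicityPair_fst p
  · rw [pairToBiPar_eq_filter, Multiset.sum_map_filter_ne (a := (0, 0)) rfl, Multiset.map_map]
    exact sum_multiplicityPair_snd p

theorem exists_pairToBiPar_eq (hn : 2 * k ≤ n) {b : Multiset (ℕ × ℕ)} (hb : IsBiPar k b) :
    ∃ p : Sym (Fin n) k × Sym (Fin n) k, pairToBiPar n k p.1 p.2 = b := by
  set m := b + Multiset.replicate (n - Multiset.card b) (0, 0)
  have hm : Multiset.card m = Fintype.card (Fin n) := by
    have := card_le_of_isBiPar hb
    simp only [m, Multiset.card_add, Multiset.card_replicate, Fintype.card_fin]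
    omega
  obtain ⟨f, hf⟩ := Fintype.exists_map_univ_eq m hm
  have hsum (g : ℕ × ℕ → ℕ) (hg : g (0, 0) = 0) : ∑ i, g (f i) = (b.map g).sum := by
    change (Finset.univ.val.map (g ∘ f)).sum = _
    rw [← Multiset.map_map, hf]
    simp [m, hg]
  obtain ⟨p, hp⟩ :=
    exists_multiplicityPair_eq ((hsum _ rfl).trans hb.2.1) ((hsum _ rfl).trans hb.2.2)
  refine ⟨p, ?_⟩
  rw [pairToBiPar_eq_filter, hp, hf, Multiset.filter_add,
    Multiset.filter_eq_self.2 fun _ hx => ne_of_mem_of_not_mem hx hb.1,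
    Multiset.filter_eq_nil.2 fun _ hx => not_not.2 (Multiset.eq_of_mem_replicate hx), add_zero]

end Orbits

theorem stmt6_general (n k : ℕ) (hn : 2 * k ≤ n) :
    ∃ e : Quotient (MulAction.orbitRel (Equiv.Perm (Fin n)) (Sym (Fin n) k × Sym (Fin n) k)) ≃
        {b : Multiset (ℕ × ℕ) // IsBiPar k b},
      ∀ p : Sym (Fin n) k × Sym (Fin n) k,
        (e (Quotient.mk (MulAction.orbitRel (Equiv.Perm (Fin n))
              (Sym (Fin n) k × Sym (Fin n) k)) p)).1 = pairToBiPar n k p.1 p.2 := by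
  let F : Quotient (MulAction.orbitRel (Perm (Fin n)) (Sym (Fin n) k × Sym (Fin n) k)) →
      {b : Multiset (ℕ × ℕ) // IsBiPar k b} :=
    Quotient.lift (fun p => ⟨pairToBiPar n k p.1 p.2, isBiPar_pairToBiPar p⟩)
      fun p q h => Subtype.ext ((pairToBiPar_eq_iff_mem_orbit p q).2 h)
  refine ⟨Equiv.ofBijective F ⟨?_, ?_⟩, fun _ => rfl⟩
  · rintro ⟨p⟩ ⟨q⟩ h
    exact Quotient.sound ((pairToBiPar_eq_iff_mem_orbit p q).1 (congrArg Subtype.val h))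
  · rintro ⟨b, hb⟩
    obtain ⟨p, rfl⟩ := exists_pairToBiPar_eq hn hb
    exact ⟨Quotient.mk _ p, rfl⟩

theorem stmt6 (n k : ℕ) (hk : 1 ≤ k) (hn : 2 * k ≤ n) :
    ∃ e : Quotient (MulAction.orbitRel (Equiv.Perm (Fin n)) (Sym (Fin n) k × Sym (Fin n) k)) ≃
        {b : Multiset (ℕ × ℕ) // IsBiPar k b},
      ∀ p : Sym (Fin n) k × Sym (Fin n) k,
        (e (Quotient.mk (MulAction.orbitRel (Equiv.Perm (Fin n))
              (Sym (Fin n) k × Sym (Fin n) k)) p)).1 = pairToBiPar n k p.1 p.2 :=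
  stmt6_general n k hn

end SP
end

section
/- Let k ≥ 0 and let λ = (λ_1,…,λ_ℓ) be a partition of l, where 0 ≤ l ≤ k. Then there exists a partition ν with |ν| ≤ k and exactly l parts such that K_{λ,Ψ(ν)} > 0, if and only if Σ_{i=1}^{ℓ} i·λ_i ≤ k. -/
/-
If `T` is a semistandard tableau of shape `λ` and content `μ`, each entry is at least its row
index (columns strictly increase from `0`), so
`b̄(λ) = ∑_{cells} (row + 1) ≤ ∑_{cells} (T + 1) = b̄(μ)`.
For `μ = Ψ(ν)`, the weighted sum `∑ i·μ_i` is smallest when the multiplicities are listed in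
decreasing order; listing them instead along the distinct parts `v_1 < v_2 < ⋯` of `ν`, where
`v_i ≥ i`, gives `b̄(Ψ(ν)) ≤ ∑ v_i · mult(v_i) = |ν|`.
Conversely `ν = (1^{λ_1}, 2^{λ_2}, …)` has `ℓ(ν) = |λ|`, `|ν| = b̄(λ)` and `Ψ(ν) = λ`, and
`K_{λ,λ} > 0` via the tableau filling row `i` with `i`.
-/

namespace SP

/-- The Young diagram with row lengths given by the multiset `lam` (sorted decreasingly). -/
def shapeOf (lam : Multiset ℕ) : YoungDiagram :=
  YoungDiagram.ofRowLens (lam.sort (· ≥ ·)) (List.sortedGE_iff_pairwise.mpr (Multiset.pairwise_sort _ _))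

/-- The Kostka number `K_{λ,μ}`: the number of semistandard Young tableaux of shape `λ`
and content `μ`, i.e. in which the value `j` (0-based) occurs exactly `μ_{j+1}` times. -/
noncomputable def kostka (lam mu : Multiset ℕ) : ℕ :=
  Nat.card {T : SemistandardYoungTableau (shapeOf lam) //
    ∀ j : ℕ, ((shapeOf lam).cells.filter fun c => T c.1 c.2 = j).card
      = (mu.sort (· ≥ ·)).getD j 0}

/-- The statistic `b̄(λ) = Σ_i i·λ_i` (1-based indices, parts in weakly decreasing
order; here `List.enum` provides 0-based indices, whence the shift by one). -/
def bbarStat (lam : Multiset ℕ) : ℕ :=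
  ((lam.sort (· ≥ ·)).zipIdx.map fun p => (p.2 + 1) * p.1).sum

open Finset

section WeightedSum

def weightedSum (L : List ℕ) : ℕ :=
  (L.zipIdx.map fun p => (p.2 + 1) * p.1).sum

theorem sum_map_zipIdx_succ_mul (L : List ℕ) (n : ℕ) :
    ((L.zipIdx n).map fun p => (p.2 + 1) * p.1).sum = n * L.sum + weightedSum L := by
  induction L generalizing n with
  | nil => rfl
  | cons a L ih =>
    rw [List.zipIdx_cons, List.map_cons, List.sum_cons, ih]
    conv_rhs =>
      rw [weightedSum, List.zipIdx_cons, List.map_cons, List.sum_cons, List.sum_cons, ih]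
    ring

theorem weightedSum_cons (a : ℕ) (L : List ℕ) :
    weightedSum (a :: L) = a + L.sum + weightedSum L := by
  rw [weightedSum, List.zipIdx_cons, List.map_cons, List.sum_cons, sum_map_zipIdx_succ_mul]
  ring

theorem sum_range_getD (L : List ℕ) : ∑ i ∈ range L.length, L.getD i 0 = L.sum := by
  induction L with
  | nil => rfl
  | cons a L ih =>
    rw [List.length_cons, sum_range_succ']
    simp only [List.getD_cons_succ, List.getD_cons_zero, ih, List.sum_cons]
    ring

theorem weightedSum_eq_sum_range (L : List ℕ) :
    weightedSum L = ∑ i ∈ range L.length, (i + 1) * L.getD i 0 := by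
  induction L with
  | nil => rfl
  | cons a L ih =>
    simp only [weightedSum_cons, ih, List.length_cons, sum_range_succ', List.getD_cons_succ,
      List.getD_cons_zero, add_mul, sum_add_distrib, one_mul, sum_range_getD]
    ring

theorem weightedSum_cons_erase_le {a : ℕ} {L : List ℕ} (ha : a ∈ L) (hmax : ∀ b ∈ L, b ≤ a) :
    weightedSum (a :: L.erase a) ≤ weightedSum L := by
  induction L with
  | nil => simp at ha
  | cons b L ih =>
    rcases eq_or_ne b a with rfl | hba
    · rw [List.erase_cons_head]
    have haL : a ∈ L := (List.mem_cons.1 ha).resolve_left hba.symm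
    have hb : b ≤ a := hmax b List.mem_cons_self
    have ih := ih haL fun c hc => hmax c (List.mem_cons_of_mem b hc)
    have hsum : L.sum = a + (L.erase a).sum := (List.sum_erase haL).symm
    rw [List.erase_cons_tail (by simpa using hba)]
    simp only [weightedSum_cons, List.sum_cons] at ih ⊢
    omega

theorem weightedSum_le_of_perm {L₁ L₂ : List ℕ} (hs : L₁.Pairwise (· ≥ ·))
    (hp : L₁.Perm L₂) : weightedSum L₁ ≤ weightedSum L₂ := by
  induction L₁ generalizing L₂ with
  | nil => rw [← hp.nil_eq]
  | cons a L ih =>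
    have ha : a ∈ L₂ := hp.mem_iff.1 List.mem_cons_self
    have hmax : ∀ b ∈ L₂, b ≤ a := fun b hb =>
      (List.mem_cons.1 (hp.mem_iff.2 hb)).elim (·.le) (List.rel_of_pairwise_cons hs)
    have hperm : L.Perm (L₂.erase a) := (List.cons_perm_iff_perm_erase.1 hp).2
    calc weightedSum (a :: L) ≤ weightedSum (a :: L₂.erase a) := by
          simp only [weightedSum_cons, hperm.sum_eq]
          exact Nat.add_le_add_left (ih hs.of_cons hperm) _
      _ ≤ weightedSum L₂ := weightedSum_cons_erase_le ha hmax

theorem bbarStat_coe_le_weightedSum (L : List ℕ) : bbarStat L ≤ weightedSum L :=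
  weightedSum_le_of_perm (Multiset.pairwise_sort _ _)
    (Multiset.coe_eq_coe.1 (Multiset.sort_eq _ _))

theorem mul_sum_add_weightedSum_map_le (c : ℕ → ℕ) {D : List ℕ} (hD : D.Pairwise (· < ·))
    {t : ℕ} (ht : ∀ v ∈ D, t < v) :
    t * (D.map c).sum + weightedSum (D.map c) ≤ (D.map fun v => c v * v).sum := by
  induction D generalizing t with
  | nil => rfl
  | cons v D ih =>
    have hv : t + 1 ≤ v := ht v List.mem_cons_self
    have ih := ih hD.of_cons fun w hw => hv.trans_lt (List.rel_of_pairwise_cons hD hw)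
    simp only [List.map_cons, List.sum_cons, weightedSum_cons] at ih ⊢
    nlinarith [Nat.mul_le_mul_left (c v) hv]

variable {α : Type*} {s : Finset α} {g : α → ℕ} {L : List ℕ}

theorem lt_length_of_card_filter_eq (h : ∀ j, #(s.filter (g · = j)) = L.getD j 0) {x : α}
    (hx : x ∈ s) : g x < L.length := by
  by_contra hge
  have hfiber := h (g x)
  rw [List.getD_eq_default _ _ (not_lt.1 hge), card_eq_zero] at hfiber
  exact (eq_empty_iff_forall_notMem.1 hfiber) x (mem_filter.2 ⟨hx, rfl⟩)

theorem sum_add_one_eq_weightedSum (h : ∀ j, #(s.filter (g · = j)) = L.getD j 0) :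
    ∑ x ∈ s, (g x + 1) = weightedSum L := by
  rw [weightedSum_eq_sum_range,
    ← sum_fiberwise_of_maps_to fun x hx => mem_range.2 (lt_length_of_card_filter_eq h hx)]
  refine sum_congr rfl fun j _ => ?_
  rw [sum_congr rfl fun x hx => by rw [(mem_filter.1 hx).2], sum_const, h, smul_eq_mul, mul_comm]

end WeightedSum

section Multiplicities

theorem multMultiset_add {s t : Multiset ℕ} (h : Disjoint s t) :
    multMultiset (s + t) = multMultiset s + multMultiset t := by
  rw [multMultiset, Multiset.Disjoint.dedup_add h, Multiset.map_add]
  congr 1 <;> refine Multiset.map_congr rfl fun v hv => ?_ <;>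
    rw [Multiset.mem_dedup] at hv <;> rw [Multiset.count_add]
  · rw [Multiset.count_eq_zero_of_notMem (Multiset.disjoint_left.1 h hv), add_zero]
  · rw [Multiset.count_eq_zero_of_notMem (Multiset.disjoint_right.1 h hv), zero_add]

theorem multMultiset_map_of_injective {f : ℕ → ℕ} (hf : f.Injective) (s : Multiset ℕ) :
    multMultiset (s.map f) = multMultiset s := by
  rw [multMultiset, Multiset.dedup_map_of_injective hf, Multiset.map_map]
  exact Multiset.map_congr rfl fun v _ => Multiset.count_map_eq_count' f s hf v

theorem multMultiset_replicate {a : ℕ} (ha : a ≠ 0) (x : ℕ) :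
    multMultiset (Multiset.replicate a x) = {a} := by
  rw [multMultiset, ← Multiset.coe_replicate, Multiset.coe_dedup, List.replicate_dedup ha,
    Multiset.coe_replicate, Multiset.map_coe, List.map_singleton, Multiset.count_replicate_self]
  rfl

/-- The partition `(1^{a_1}, 2^{a_2}, …)` having multiplicities `L = [a_1, a_2, …]`. -/
def ofMultiplicities : List ℕ → Multiset ℕ
  | [] => 0
  | a :: L => Multiset.replicate a 1 + (ofMultiplicities L).map (· + 1)

theorem pos_of_mem_ofMultiplicities {L : List ℕ} {x : ℕ} (hx : x ∈ ofMultiplicities L) :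
    0 < x := by
  cases L with
  | nil => simp [ofMultiplicities] at hx
  | cons a L =>
    rcases Multiset.mem_add.1 hx with h | h
    · rw [Multiset.eq_of_mem_replicate h]; exact one_pos
    · obtain ⟨y, -, rfl⟩ := Multiset.mem_map.1 h
      exact y.succ_pos

theorem card_ofMultiplicities (L : List ℕ) : Multiset.card (ofMultiplicities L) = L.sum := by
  induction L with
  | nil => rfl
  | cons a L ih => simp [ofMultiplicities, ih]

theorem sum_ofMultiplicities (L : List ℕ) : (ofMultiplicities L).sum = weightedSum L := by
  induction L with
  | nil => rfl
  | cons a L ih =>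
    simp only [ofMultiplicities, weightedSum_cons, Multiset.sum_add, Multiset.sum_replicate,
      Multiset.sum_map_add, Multiset.map_id', Multiset.map_const', ih,
      card_ofMultiplicities, smul_eq_mul, mul_one]
    ring

theorem multMultiset_ofMultiplicities {L : List ℕ} (hL : ∀ a ∈ L, 0 < a) :
    multMultiset (ofMultiplicities L) = L := by
  induction L with
  | nil => rfl
  | cons a L ih =>
    have hdisj : Disjoint (Multiset.replicate a 1) ((ofMultiplicities L).map (· + 1)) := by
      refine Multiset.disjoint_left.2 fun hx hmem => ?_
      obtain ⟨y, hy, hxy⟩ := Multiset.mem_map.1 hmem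
      rw [Multiset.eq_of_mem_replicate hx] at hxy
      exact (pos_of_mem_ofMultiplicities hy).ne' (by omega)
    rw [ofMultiplicities, multMultiset_add hdisj,
      multMultiset_replicate (hL a List.mem_cons_self).ne',
      multMultiset_map_of_injective (add_left_injective 1),
      ih fun b hb => hL b (List.mem_cons_of_mem a hb), Multiset.singleton_add, Multiset.cons_coe]

theorem bbarStat_multMultiset_le (s : Multiset ℕ) (hs : ∀ x ∈ s, 0 < x) :
    bbarStat (multMultiset s) ≤ s.sum := by
  set D := s.toFinset.sort (· ≤ ·)
  have hΨ : multMultiset s = ↑(D.map (s.count ·)) := by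
    rw [multMultiset, ← Multiset.map_coe, Finset.sort_eq, Multiset.toFinset_val]
  have hsum : (D.map fun v => s.count v * v).sum = s.sum := by
    rw [← Multiset.sum_coe, ← Multiset.map_coe, Finset.sort_eq, Finset.sum_multiset_count s]
    rfl
  have hD : D.Pairwise (· < ·) := (Finset.sortedLT_sort _).pairwise
  have hDpos : ∀ v ∈ D, 0 < v := fun v hv =>
    hs v (Multiset.mem_toFinset.1 (Finset.mem_sort _ |>.1 hv))
  calc bbarStat (multMultiset s) ≤ weightedSum (D.map (s.count ·)) :=
        hΨ ▸ bbarStat_coe_le_weightedSum _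
    _ ≤ (D.map fun v => s.count v * v).sum := by
        simpa using mul_sum_add_weightedSum_map_le (s.count ·) hD hDpos
    _ = s.sum := hsum

end Multiplicities

section Tableaux

theorem rowLen_shapeOf (m : Multiset ℕ) (i : ℕ) :
    (shapeOf m).rowLen i = (m.sort (· ≥ ·)).getD i 0 := by
  by_cases hi : i < (m.sort (· ≥ ·)).length
  · rw [List.getD_eq_getElem _ _ hi]
    exact YoungDiagram.rowLen_ofRowLens ⟨i, hi⟩
  · rw [List.getD_eq_default _ _ (not_lt.1 hi)]
    refine Nat.eq_zero_of_not_pos fun hpos => ?_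
    obtain ⟨hi', -⟩ := YoungDiagram.mem_ofRowLens.1 (YoungDiagram.mem_iff_lt_rowLen.2 hpos)
    exact hi hi'

theorem card_filter_fst_shapeOf (m : Multiset ℕ) (i : ℕ) :
    #((shapeOf m).cells.filter (·.1 = i)) = (m.sort (· ≥ ·)).getD i 0 := by
  rw [← rowLen_shapeOf, YoungDiagram.rowLen_eq_card]
  rfl

theorem _root_.SemistandardYoungTableau.le_entry {μ : YoungDiagram}
    (T : SemistandardYoungTableau μ) {i j : ℕ} (h : (i, j) ∈ μ) : i ≤ T i j := by
  induction i with
  | zero => exact Nat.zero_le _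
  | succ i ih =>
    exact ih (μ.up_left_mem i.le_succ le_rfl h) |>.trans_lt (T.col_strict i.lt_succ_self h)

theorem card_filter_highestWeight (μ : YoungDiagram) (i : ℕ) :
    #(μ.cells.filter fun c => SemistandardYoungTableau.highestWeight μ c.1 c.2 = i) =
      μ.rowLen i := by
  rw [YoungDiagram.rowLen_eq_card, YoungDiagram.row]
  congr 1
  refine filter_congr fun c hc => ?_
  rw [SemistandardYoungTableau.highestWeight_apply, if_pos ((YoungDiagram.mem_cells _).1 hc)]

theorem finite_tableaux_of_content (lam mu : Multiset ℕ) :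
    Finite {T : SemistandardYoungTableau (shapeOf lam) //
      ∀ j : ℕ, ((shapeOf lam).cells.filter fun c => T c.1 c.2 = j).card
        = (mu.sort (· ≥ ·)).getD j 0} := by
  refine Finite.of_injective
    (fun T (c : (shapeOf lam).cells) =>
      (⟨T.1 c.1.1 c.1.2, lt_length_of_card_filter_eq T.2 c.2⟩ : Fin (mu.sort (· ≥ ·)).length))
    fun T₁ T₂ h => Subtype.ext (SemistandardYoungTableau.ext fun i j => ?_)
  by_cases hc : (i, j) ∈ shapeOf lam
  · exact congrArg Fin.val (congrFun h ⟨(i, j), (YoungDiagram.mem_cells _).2 hc⟩)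
  · rw [T₁.1.zeros hc, T₂.1.zeros hc]

theorem kostka_pos_iff {lam mu : Multiset ℕ} :
    0 < kostka lam mu ↔ ∃ T : SemistandardYoungTableau (shapeOf lam),
      ∀ j : ℕ, ((shapeOf lam).cells.filter fun c => T c.1 c.2 = j).card
        = (mu.sort (· ≥ ·)).getD j 0 := by
  have := finite_tableaux_of_content lam mu
  rw [kostka, Nat.card_pos_iff]
  exact ⟨fun ⟨⟨T, hT⟩, _⟩ => ⟨T, hT⟩, fun ⟨T, hT⟩ => ⟨⟨T, hT⟩, this⟩⟩

theorem kostka_self_pos (lam : Multiset ℕ) : 0 < kostka lam lam :=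
  kostka_pos_iff.2 ⟨SemistandardYoungTableau.highestWeight _, fun j => by
    rw [card_filter_highestWeight, rowLen_shapeOf]⟩

theorem bbarStat_le_of_kostka_pos {lam mu : Multiset ℕ} (h : 0 < kostka lam mu) :
    bbarStat lam ≤ bbarStat mu := by
  obtain ⟨T, hT⟩ := kostka_pos_iff.1 h
  calc bbarStat lam = ∑ c ∈ (shapeOf lam).cells, (c.1 + 1) :=
        (sum_add_one_eq_weightedSum (card_filter_fst_shapeOf lam)).symm
    _ ≤ ∑ c ∈ (shapeOf lam).cells, (T c.1 c.2 + 1) :=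
        sum_le_sum fun c hc =>
          Nat.succ_le_succ (T.le_entry ((YoungDiagram.mem_cells _).1 hc))
    _ = bbarStat mu := sum_add_one_eq_weightedSum hT

end Tableaux

theorem stmt13_general (k l : ℕ) (lam : Nat.Partition l) :
    (∃ i ≤ k, ∃ ν : Nat.Partition i, ν.parts.card = l ∧
        0 < kostka lam.parts (multMultiset ν.parts)) ↔
      bbarStat lam.parts ≤ k := by
  constructor
  · rintro ⟨i, hik, ν, -, hpos⟩
    calc bbarStat lam.parts ≤ bbarStat (multMultiset ν.parts) := bbarStat_le_of_kostka_pos hpos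
      _ ≤ ν.parts.sum := bbarStat_multMultiset_le _ fun _ => ν.parts_pos
      _ = i := ν.parts_sum
      _ ≤ k := hik
  · intro h
    set L := lam.parts.sort (· ≥ ·)
    have hL : (L : Multiset ℕ) = lam.parts := Multiset.sort_eq _ _
    let ν : Nat.Partition (bbarStat lam.parts) :=
      ⟨ofMultiplicities L, pos_of_mem_ofMultiplicities, sum_ofMultiplicities L⟩
    refine ⟨_, h, ν, ?_, ?_⟩
    · rw [card_ofMultiplicities, ← Multiset.sum_coe, hL, lam.parts_sum]
    · have hLpos : ∀ a ∈ L, 0 < a := fun a ha => lam.parts_pos (hL ▸ Multiset.mem_coe.2 ha)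
      rw [multMultiset_ofMultiplicities hLpos, hL]
      exact kostka_self_pos _

theorem stmt13 (k l : ℕ) (hl : l ≤ k) (lam : Nat.Partition l) :
    (∃ i ≤ k, ∃ ν : Nat.Partition i, ν.parts.card = l ∧
        0 < kostka lam.parts (multMultiset ν.parts)) ↔
      bbarStat lam.parts ≤ k :=
  stmt13_general k l lam

end SP
end

section
/- For every integer n and every partition λ, there exists at most one partition μ such that (λ, μ) is an n-pair. -/
/-!
Both added rows must be the same row `i`: if `μ` extends row `a` and `ν` extends row `b < a`,
then `μ_a ≤ μ_b = λ_b < ν_b`, whereas equal contents force `μ_a - a = ν_b - b`, i.e.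
`μ_a > ν_b`. Once the row is fixed, the content `|λ| + μ_i - i = n` pins down its new length,
and every other row of `μ` is that of `λ`.
-/

namespace SP

/-- The length of the `i`-th row (0-based) of the Young diagram of the partition whose
parts form the multiset `lam` (parts listed in weakly decreasing order). -/
def rowLen (lam : Multiset ℕ) (i : ℕ) : ℕ := (lam.sort (· ≥ ·)).getD i 0

/-- `(λ, μ)` is an `n`-pair: `λ` and `μ` are partitions (multisets of positive
integers), the Young diagram of `μ` is obtained from that of `λ` by adding nodes in
exactly one row, and the rightmost added node, in row `i` and column `j`
(both 1-based; matrix convention), has `|λ|`-content `|λ| + j - i = n`. -/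
def IsNPair (n : ℤ) (lam mu : Multiset ℕ) : Prop :=
  (∀ x ∈ lam, 0 < x) ∧ (∀ x ∈ mu, 0 < x) ∧
    ∃ i : ℕ, rowLen lam i < rowLen mu i ∧ (∀ j : ℕ, j ≠ i → rowLen mu j = rowLen lam j) ∧
      (lam.sum : ℤ) + (rowLen mu i : ℤ) - ((i : ℤ) + 1) = n

theorem _root_.List.Pairwise.antitone_getD {α : Type*} [Preorder α] {l : List α}
    (hl : l.Pairwise (· ≥ ·)) {d : α} (hd : ∀ x ∈ l, d ≤ x) : Antitone (l.getD · d) := by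
  intro i j hij
  dsimp only
  rcases lt_or_ge j l.length with hj | hj
  · rw [List.getD_eq_getElem _ _ hj, List.getD_eq_getElem _ _ (hij.trans_lt hj)]
    rcases hij.lt_or_eq with hij | rfl
    · exact List.pairwise_iff_getElem.mp hl i j _ hj hij
    · exact le_rfl
  · rw [List.getD_eq_default _ _ hj]
    rcases lt_or_ge i l.length with hi | hi
    · rw [List.getD_eq_getElem _ _ hi]
      exact hd _ (List.getElem_mem hi)
    · rw [List.getD_eq_default _ _ hi]

theorem _root_.List.ext_getD_of_notMem {α : Type*} {l₁ l₂ : List α} {d : α} (h₁ : d ∉ l₁)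
    (h₂ : d ∉ l₂) (h : ∀ i, l₁.getD i d = l₂.getD i d) : l₁ = l₂ := by
  refine List.ext_getElem? fun i => ?_
  have hi := h i
  simp only [List.getD_eq_getElem?_getD] at hi
  cases e₁ : l₁[i]? <;> cases e₂ : l₂[i]? <;>
    simp only [e₁, e₂, Option.getD_none, Option.getD_some] at hi
  · rfl
  · exact absurd (hi ▸ List.mem_of_getElem? e₂) h₂
  · exact absurd (hi ▸ List.mem_of_getElem? e₁) h₁
  · rw [hi]

theorem rowLen_antitone (m : Multiset ℕ) : Antitone (rowLen m) :=
  (m.pairwise_sort _).antitone_getD fun _ _ => Nat.zero_le _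

theorem eq_of_rowLen_eq {m₁ m₂ : Multiset ℕ} (hm₁ : ∀ x ∈ m₁, 0 < x) (hm₂ : ∀ x ∈ m₂, 0 < x)
    (h : ∀ i, rowLen m₁ i = rowLen m₂ i) : m₁ = m₂ := by
  have notMem_sort {m : Multiset ℕ} (hm : ∀ x ∈ m, 0 < x) : 0 ∉ m.sort (· ≥ ·) :=
    fun h0 => (hm 0 ((Multiset.mem_sort _).mp h0)).false
  rw [← m₁.sort_eq (· ≥ ·), ← m₂.sort_eq (· ≥ ·),
    List.ext_getD_of_notMem (notMem_sort hm₁) (notMem_sort hm₂) h]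

theorem le_of_rowLen_sub_eq {lam mu nu : Multiset ℕ} {a b : ℕ}
    (hmu : ∀ j, j ≠ a → rowLen mu j = rowLen lam j) (hnu : rowLen lam b < rowLen nu b)
    (hcontent : (rowLen mu a : ℤ) - a = rowLen nu b - b) : a ≤ b := by
  by_contra! hba
  have hmu_b : rowLen mu b = rowLen lam b := hmu b hba.ne
  have hmu_anti : rowLen mu a ≤ rowLen mu b := rowLen_antitone mu hba.le
  omega

/-- For every integer `n` and every partition `λ` there is at most one partition `μ`
such that `(λ, μ)` is an `n`-pair. -/
theorem stmt14 (n : ℤ) (lam mu₁ mu₂ : Multiset ℕ)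
    (h₁ : IsNPair n lam mu₁) (h₂ : IsNPair n lam mu₂) : mu₁ = mu₂ := by
  obtain ⟨-, hpos₁, i₁, hlt₁, hrows₁, hn₁⟩ := h₁
  obtain ⟨-, hpos₂, i₂, hlt₂, hrows₂, hn₂⟩ := h₂
  have hcontent : (rowLen mu₁ i₁ : ℤ) - i₁ = rowLen mu₂ i₂ - i₂ := by linarith
  obtain rfl : i₁ = i₂ :=
    le_antisymm (le_of_rowLen_sub_eq hrows₁ hlt₂ hcontent)
      (le_of_rowLen_sub_eq hrows₂ hlt₁ hcontent.symm)
  refine eq_of_rowLen_eq hpos₁ hpos₂ fun j => ?_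
  rcases eq_or_ne j i₁ with rfl | hj
  · omega
  · rw [hrows₁ j hj, hrows₂ j hj]

end SP
end
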